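/- arXiv:2509.02944 — 4 statements merged into one kernel-verified Lean document; each statement's English description precedes it below -/
import Mathlib

section
/- Let L ≥ 1 and let n : ZMod L → ℕ satisfy n i ≤ 2 for every i and Σ_{i ∈ ZMod L} n i = L (half filling). Let D = |{i : n i = 2}| be the number of doubly occupied sites. Then the nearest-neighbor sum satisfies Σ_{i ∈ ZMod L} (n i)·(n (i+1)) ≥ L − 2·D. -/
/-!
Give a site of occupation `k` the weight `w k = 2k - 1 - 2·[k = 2]`, so that `w 0 = -1`,
`w 1 = 1`, `w 2 = 1`. For occupations `a, b ≤ 2` one checks `w a + w b ≤ 2ab` on each bond.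
Summing over the bonds of the ring counts every site twice, so `Σᵢ w (nᵢ) ≤ Σᵢ nᵢ n_{i+1}`,
and at half filling `Σᵢ w (nᵢ) = 2L - L - 2D = L - 2D`.
-/

open Finset

theorem sum_le_sum_of_add_comp_perm_le {ι M : Type*} [Fintype ι]
    [AddCommMonoid M] [LinearOrder M] [IsOrderedCancelAddMonoid M] (σ : Equiv.Perm ι)
    (u b : ι → M) (h : ∀ i, u i + u (σ i) ≤ b i + b i) : ∑ i, u i ≤ ∑ i, b i := by
  have hdouble : ∑ i, u i + ∑ i, u i ≤ ∑ i, b i + ∑ i, b i := by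
    simpa only [sum_add_distrib, Equiv.sum_comp σ u] using sum_le_sum fun i (_ : i ∈ univ) => h i
  by_contra! hlt
  exact (add_lt_add hlt hlt).not_ge hdouble

def siteWeight (k : ℕ) : ℤ := 2 * k - 1 - 2 * if k = 2 then 1 else 0

theorem siteWeight_add_siteWeight_le {a b : ℕ} (ha : a ≤ 2) (hb : b ≤ 2) :
    siteWeight a + siteWeight b ≤ (a * b : ℕ) + (a * b : ℕ) := by
  interval_cases a <;> interval_cases b <;> decide

theorem sum_siteWeight {ι : Type*} [Fintype ι] (n : ι → ℕ) :
    ∑ i, siteWeight (n i)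
      = 2 * ∑ i, (n i : ℤ) - Fintype.card ι - 2 * #{i | n i = 2} := by
  simp only [siteWeight, sum_sub_distrib, ← mul_sum, sum_boole, sum_const, card_univ,
    nsmul_eq_mul, mul_one]

/-- At half filling on a ring of `L` sites with occupations at most 2, the
nearest-neighbor sum `Σᵢ nᵢ·n_{i+1}` is at least `L - 2·D`, where `D` is the number of
doubly occupied sites. -/
theorem nearest_neighbor_sum_ge (L : ℕ) [NeZero L]
    (n : ZMod L → ℕ) (hmax : ∀ i, n i ≤ 2)
    (hfill : ∑ i : ZMod L, n i = L) :
    (L : ℤ) - 2 * (Finset.univ.filter (fun i : ZMod L => n i = 2)).card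
      ≤ (∑ i : ZMod L, n i * n (i + 1) : ℕ) := by
  have hweight : ∑ i, siteWeight (n i)
      = (L : ℤ) - 2 * (Finset.univ.filter (fun i : ZMod L => n i = 2)).card := by
    rw [sum_siteWeight, ZMod.card, ← Nat.cast_sum, hfill]
    ring
  rw [← hweight, Nat.cast_sum]
  exact sum_le_sum_of_add_comp_perm_le (Equiv.addRight 1) _ _
    fun i => siteWeight_add_siteWeight_le (hmax i) (hmax (i + 1))
end

section
/- Let L ≥ 1, let U, V be nonnegative real numbers, and let n : ZMod L → ℕ satisfy n i ≤ 2 for every i and Σ_{i ∈ ZMod L} n i = L (half filling). Define the energy E(n) = U·|{i : n i = 2}| + V·Σ_{i ∈ ZMod L} (n i)·(n (i+1)). Then E(n) ≥ min(U·L/2, V·L). -/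
/-!
Half filling forces the number of doubly occupied sites `D` to equal the number of empty sites.
A bond `nᵢ nᵢ₊₁` is at least `nᵢ` unless site `i + 1` is empty, and then it falls short by
`nᵢ ≤ 2`; summing, `Σ nᵢ nᵢ₊₁ ≥ L - 2D`. The energy is then at least `U D + V max(0, L - 2D)`,
a piecewise linear function of `D ≥ 0` whose minimum is `min(U L / 2, V L)`.
-/

open Finset

section Occupation

variable {ι : Type*} [Fintype ι] {n : ι → ℕ}

theorem sum_add_card_filter_eq_zero (hmax : ∀ i, n i ≤ 2) :
    ∑ i, n i + #{i | n i = 0} = Fintype.card ι + #{i | n i = 2} := by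
  have pointwise : ∀ i, n i + (if n i = 0 then 1 else 0) = 1 + (if n i = 2 then 1 else 0) := by
    intro i
    have := hmax i
    interval_cases n i <;> rfl
  simpa only [sum_add_distrib, sum_boole, sum_const, card_univ, smul_eq_mul, mul_one,
    Nat.cast_id] using Fintype.sum_congr _ _ pointwise

theorem card_filter_eq_two_eq_card_filter_eq_zero (hmax : ∀ i, n i ≤ 2)
    (hfill : ∑ i, n i = Fintype.card ι) :
    #{i | n i = 2} = #{i | n i = 0} := by
  have := sum_add_card_filter_eq_zero hmax
  omega

theorem le_mul_add_two_mul_ite_eq_zero {a : ℕ} (ha : a ≤ 2) (b : ℕ) :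
    a ≤ a * b + 2 * (if b = 0 then 1 else 0) := by
  rcases Nat.eq_zero_or_pos b with rfl | hb
  · simpa using ha
  · simpa [hb.ne'] using Nat.le_mul_of_pos_right a hb

theorem sum_le_sum_mul_comp_add_two_mul_card (σ : Equiv.Perm ι) (hmax : ∀ i, n i ≤ 2) :
    ∑ i, n i ≤ ∑ i, n i * n (σ i) + 2 * #{i | n i = 0} := by
  have shift : ∑ i, (if n (σ i) = 0 then 1 else 0) = #{i | n i = 0} := by
    rw [Equiv.sum_comp σ (fun i => if n i = 0 then 1 else 0), sum_boole, Nat.cast_id]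
  calc ∑ i, n i ≤ ∑ i, (n i * n (σ i) + 2 * (if n (σ i) = 0 then 1 else 0)) :=
        sum_le_sum fun i _ => le_mul_add_two_mul_ite_eq_zero (hmax i) _
    _ = ∑ i, n i * n (σ i) + 2 * #{i | n i = 0} := by
        rw [sum_add_distrib, ← mul_sum, shift]

end Occupation

theorem min_le_mul_add_mul_of_le_add_two_mul {U V L D S : ℝ} (hU : 0 ≤ U) (hV : 0 ≤ V)
    (hD : 0 ≤ D) (hS : 0 ≤ S) (hLS : L ≤ S + 2 * D) :
    min (U * L / 2) (V * L) ≤ U * D + V * S := by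
  rcases le_total L (2 * D) with hL | hL
  · exact (min_le_left _ _).trans (by nlinarith)
  rcases le_total U (2 * V) with hUV | hUV
  · exact (min_le_left _ _).trans (by nlinarith)
  · exact (min_le_right _ _).trans (by nlinarith)

/-- Extended Hubbard model at `t = 0` on a ring of `L` sites at half filling: the energy
`E(n) = U·D + V·Σᵢ nᵢ·n_{i+1}` of every configuration is at least `min(U·L/2, V·L)`. -/
theorem hubbard_t0_energy_lower_bound (L : ℕ) [NeZero L]
    (U V : ℝ) (hU : 0 ≤ U) (hV : 0 ≤ V)
    (n : ZMod L → ℕ) (hmax : ∀ i, n i ≤ 2)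
    (hfill : ∑ i : ZMod L, n i = L) :
    min (U * L / 2) (V * L)
      ≤ U * (Finset.univ.filter (fun i : ZMod L => n i = 2)).card
          + V * ∑ i : ZMod L, ((n i : ℝ) * (n (i + 1) : ℝ)) := by
  have doubles_eq_holes := card_filter_eq_two_eq_card_filter_eq_zero hmax
    (hfill.trans (ZMod.card L).symm)
  have bond_bound := sum_le_sum_mul_comp_add_two_mul_card (Equiv.addRight 1) hmax
  rw [hfill, ← doubles_eq_holes] at bond_bound
  refine min_le_mul_add_mul_of_le_add_two_mul hU hV (by positivity) (by positivity) ?_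
  exact_mod_cast bond_bound
end

section
/- Let L be an even natural number with L ≥ 2, and let U, V be nonnegative real numbers with U ≤ 2V. Then the minimum over all configurations n : ZMod L → ℕ with n i ≤ 2 and Σ_{i ∈ ZMod L} n i = L of the energy E(n) = U·|{i : n i = 2}| + V·Σ_{i ∈ ZMod L} (n i)·(n (i+1)) equals U·L/2, and it is attained (e.g., by the charge-density-wave configuration that alternates doubly occupied and empty sites). -/
/-!
Write `Z`, `S`, `D` for the numbers of empty, singly and doubly occupied sites. Counting sites
and particles gives `Z + S + D = L = S + 2D`, so `Z = D`. Every occupied site followed by an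
empty one can be charged to that empty site, so at least `(S + D) - Z = S` bonds join two
occupied sites, each costing at least `V`. Hence `E ≥ U D + V S ≥ U D + U S / 2 = U L / 2`
when `U ≤ 2V`. The charge-density wave `2, 0, 2, 0, …` has `S = 0`, `D = L / 2` and no
occupied bonds, so it attains the bound.
-/

open Finset

namespace Hubbard

variable {ι : Type*}

-- `σ` is the next-site map `i ↦ i + 1` of the ring.
def energy [Fintype ι] (U V : ℝ) (σ : Equiv.Perm ι) (n : ι → ℕ) : ℝ :=
  U * #{i | n i = 2} + V * ∑ i, (n i : ℝ) * n (σ i)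

section Counting

variable [Fintype ι] {n : ι → ℕ}

lemma card_zero_add_card_one_add_card_two (hn : ∀ i, n i ≤ 2) :
    #{i | n i = 0} + #{i | n i = 1} + #{i | n i = 2} = Fintype.card ι := by
  rw [Fintype.card_eq_sum_ones]
  simp only [card_filter, ← sum_add_distrib]
  refine sum_congr rfl fun i _ => ?_
  have := hn i
  split_ifs <;> omega

lemma sum_eq_card_one_add_two_mul_card_two (hn : ∀ i, n i ≤ 2) :
    ∑ i, n i = #{i | n i = 1} + 2 * #{i | n i = 2} := by
  simp only [card_filter, mul_sum, ← sum_add_distrib]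
  refine sum_congr rfl fun i _ => ?_
  have := hn i
  split_ifs <;> omega

lemma card_ne_zero_eq_card_one_add_card_two (hn : ∀ i, n i ≤ 2) :
    #{i | n i ≠ 0} = #{i | n i = 1} + #{i | n i = 2} := by
  simp only [card_filter, ← sum_add_distrib]
  refine sum_congr rfl fun i _ => ?_
  have := hn i
  split_ifs <;> omega

lemma card_occupied_eq_card_add_card (σ : Equiv.Perm ι) :
    #{i | n i ≠ 0} = #{i | n i ≠ 0 ∧ n (σ i) ≠ 0} + #{i | n i ≠ 0 ∧ n (σ i) = 0} := by
  simp only [card_filter, ← sum_add_distrib]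
  refine sum_congr rfl fun i _ => ?_
  split_ifs <;> tauto

lemma card_occupied_before_empty_le (σ : Equiv.Perm ι) :
    #{i | n i ≠ 0 ∧ n (σ i) = 0} ≤ #{i | n i = 0} :=
  card_le_card_of_injOn σ (fun i hi => by simp_all) σ.injective.injOn

lemma card_occupied_bonds_le_sum_mul (σ : Equiv.Perm ι) :
    #{i | n i ≠ 0 ∧ n (σ i) ≠ 0} ≤ ∑ i, n i * n (σ i) := by
  rw [card_filter]
  refine sum_le_sum fun i _ => ?_
  split_ifs with h
  · exact Nat.one_le_iff_ne_zero.mpr (mul_ne_zero h.1 h.2)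
  · exact Nat.zero_le _

lemma card_one_le_sum_mul (σ : Equiv.Perm ι) (hn : ∀ i, n i ≤ 2)
    (hsum : ∑ i, n i = Fintype.card ι) :
    #{i | n i = 1} ≤ ∑ i, n i * n (σ i) := by
  have := card_zero_add_card_one_add_card_two hn
  have := sum_eq_card_one_add_two_mul_card_two hn
  have := card_ne_zero_eq_card_one_add_card_two hn
  have := card_occupied_eq_card_add_card (n := n) σ
  have := card_occupied_before_empty_le (n := n) σ
  have := card_occupied_bonds_le_sum_mul (n := n) σ
  omega

end Counting

lemma mul_card_div_two_le_energy [Fintype ι] {U V : ℝ} (hV : 0 ≤ V) (hUV : U ≤ 2 * V)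
    (σ : Equiv.Perm ι) {n : ι → ℕ} (hn : ∀ i, n i ≤ 2) (hsum : ∑ i, n i = Fintype.card ι) :
    U * Fintype.card ι / 2 ≤ energy U V σ n := by
  have hcard : (Fintype.card ι : ℝ) = #{i | n i = 1} + 2 * #{i | n i = 2} := by
    exact_mod_cast hsum.symm.trans (sum_eq_card_one_add_two_mul_card_two hn)
  have hbonds : (#{i | n i = 1} : ℝ) ≤ ∑ i, (n i : ℝ) * n (σ i) := by
    exact_mod_cast card_one_le_sum_mul σ hn hsum
  rw [energy, hcard]
  linarith [mul_le_mul_of_nonneg_left hbonds hV,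
    mul_le_mul_of_nonneg_right hUV (Nat.cast_nonneg (α := ℝ) #{i | n i = 1})]

def chargeDensityWave (p : ι → ZMod 2) (i : ι) : ℕ :=
  if p i = 0 then 2 else 0

section ChargeDensityWave

variable {p : ι → ZMod 2} {σ : Equiv.Perm ι}

lemma chargeDensityWave_le_two (i : ι) : chargeDensityWave p i ≤ 2 := by
  unfold chargeDensityWave
  split_ifs <;> omega

lemma chargeDensityWave_ne_one (i : ι) : chargeDensityWave p i ≠ 1 := by
  unfold chargeDensityWave
  split_ifs <;> omega

variable (hp : ∀ i, p (σ i) = p i + 1)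
include hp

lemma chargeDensityWave_add_next (i : ι) :
    chargeDensityWave p i + chargeDensityWave p (σ i) = 2 := by
  simp only [chargeDensityWave, hp]
  generalize p i = a
  revert a
  decide

lemma chargeDensityWave_mul_next (i : ι) :
    chargeDensityWave p i * chargeDensityWave p (σ i) = 0 := by
  simp only [chargeDensityWave, hp]
  generalize p i = a
  revert a
  decide

variable [Fintype ι]

lemma sum_chargeDensityWave : ∑ i, chargeDensityWave p i = Fintype.card ι := by
  have hshift : ∑ i, chargeDensityWave p (σ i) = ∑ i, chargeDensityWave p i :=
    Equiv.sum_comp σ (chargeDensityWave p)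
  have htwice : ∑ i, (chargeDensityWave p i + chargeDensityWave p (σ i)) =
      2 * Fintype.card ι := by
    simp [chargeDensityWave_add_next hp, mul_comm]
  rw [sum_add_distrib, hshift] at htwice
  omega

lemma energy_chargeDensityWave (U V : ℝ) :
    energy U V σ (chargeDensityWave p) = U * Fintype.card ι / 2 := by
  have hdouble : 2 * #{i | chargeDensityWave p i = 2} = Fintype.card ι := by
    have := sum_eq_card_one_add_two_mul_card_two (chargeDensityWave_le_two (p := p))
    simp [chargeDensityWave_ne_one, sum_chargeDensityWave hp] at this
    omega
  have hbonds : ∑ i, (chargeDensityWave p i : ℝ) * chargeDensityWave p (σ i) = 0 := by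
    exact_mod_cast sum_eq_zero fun i _ => chargeDensityWave_mul_next hp i
  rw [energy, hbonds, ← hdouble]
  push_cast
  ring

end ChargeDensityWave

end Hubbard

open Hubbard in
theorem hubbard_t0_ground_energy_U_branch_general (L : ℕ) (hLeven : Even L)
    [NeZero L] (U V : ℝ) (hV : 0 ≤ V) (hUV : U ≤ 2 * V) :
    IsLeast {x : ℝ | ∃ n : ZMod L → ℕ, (∀ i, n i ≤ 2) ∧ (∑ i : ZMod L, n i = L) ∧
        x = U * (Finset.univ.filter (fun i : ZMod L => n i = 2)).card
              + V * ∑ i : ZMod L, ((n i : ℝ) * (n (i + 1) : ℝ))}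
      (U * L / 2) := by
  let σ : Equiv.Perm (ZMod L) := Equiv.addRight 1
  let parity := ZMod.castHom hLeven.two_dvd (ZMod 2)
  have hparity (i : ZMod L) : parity (σ i) = parity i + 1 := by simp [σ]
  constructor
  · refine ⟨chargeDensityWave parity, chargeDensityWave_le_two, ?_, ?_⟩
    · simpa using sum_chargeDensityWave hparity
    · have := energy_chargeDensityWave hparity U V
      rw [ZMod.card] at this
      exact this.symm
  · rintro x ⟨n, hn, hsum, rfl⟩
    have := mul_card_div_two_le_energy hV hUV σ hn (hsum.trans (ZMod.card L).symm)
    rwa [ZMod.card] at this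

/-- U-dominated branch of the extended Hubbard model at `t = 0`: for an even ring of
`L ≥ 2` sites and `U ≤ 2V` (with `U, V ≥ 0`), the minimum of the energy
`E(n) = U·D + V·Σᵢ nᵢ·n_{i+1}` over all half-filling configurations equals `U·L/2`,
and it is attained. -/
theorem hubbard_t0_ground_energy_U_branch (L : ℕ) (hL2 : 2 ≤ L) (hLeven : Even L)
    [NeZero L] (U V : ℝ) (hU : 0 ≤ U) (hV : 0 ≤ V) (hUV : U ≤ 2 * V) :
    IsLeast {x : ℝ | ∃ n : ZMod L → ℕ, (∀ i, n i ≤ 2) ∧ (∑ i : ZMod L, n i = L) ∧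
        x = U * (Finset.univ.filter (fun i : ZMod L => n i = 2)).card
              + V * ∑ i : ZMod L, ((n i : ℝ) * (n (i + 1) : ℝ))}
      (U * L / 2) :=
  hubbard_t0_ground_energy_U_branch_general L hLeven U V hV hUV
end

section
/- Let L ≥ 1 be a natural number, and let U, V be nonnegative real numbers with U ≥ 2V. Then the minimum over all configurations n : ZMod L → ℕ with n i ≤ 2 and Σ_{i ∈ ZMod L} n i = L of the energy E(n) = U·|{i : n i = 2}| + V·Σ_{i ∈ ZMod L} (n i)·(n (i+1)) equals V·L, and it is attained by the spin-density-wave configuration n i = 1 for all i. -/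
/-!
For occupations `a, b ∈ {0, 1, 2}` one has `(1 - a)(1 - b) + [a = 2] + [b = 2] ≥ 0`. At half
filling `Σᵢ (1 - nᵢ)(1 - nᵢ₊₁) = Σᵢ nᵢ nᵢ₊₁ - L`, so summing over the bonds of the ring gives
`Σᵢ nᵢ nᵢ₊₁ + 2D ≥ L`, where `D` counts the doubly occupied sites. Hence
`E(n) - V L = (U - 2V) D + V (Σᵢ nᵢ nᵢ₊₁ + 2D - L) ≥ 0`, with equality for `n ≡ 1`.
-/

open Finset

noncomputable def hubbardEnergy (L : ℕ) [NeZero L] (U V : ℝ) (n : ZMod L → ℕ) : ℝ :=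
  U * #{i | n i = 2} + V * ∑ i, (n i : ℝ) * n (i + 1)

lemma one_sub_mul_one_sub_add_ite_add_ite_nonneg {a b : ℕ} (ha : a ≤ 2) (hb : b ≤ 2) :
    0 ≤ (1 - (a : ℝ)) * (1 - b) + (if a = 2 then 1 else 0) + (if b = 2 then 1 else 0) := by
  interval_cases a <;> interval_cases b <;> norm_num

lemma card_le_sum_mul_comp_add_two_mul_card {ι : Type*} [Fintype ι] (σ : Equiv.Perm ι)
    {n : ι → ℕ} (hn : ∀ i, n i ≤ 2) (hsum : ∑ i, n i = Fintype.card ι) :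
    (Fintype.card ι : ℝ) ≤ ∑ i, (n i : ℝ) * n (σ i) + 2 * #{i | n i = 2} := by
  have hbonds : 0 ≤ ∑ i, ((1 - (n i : ℝ)) * (1 - n (σ i))
      + (if n i = 2 then 1 else 0) + (if n (σ i) = 2 then 1 else 0)) :=
    sum_nonneg fun i _ => one_sub_mul_one_sub_add_ite_add_ite_nonneg (hn i) (hn (σ i))
  have hsumR : ∑ i, (n i : ℝ) = Fintype.card ι := by exact_mod_cast hsum
  have hshift_n : ∑ i, (n (σ i) : ℝ) = ∑ i, (n i : ℝ) := Equiv.sum_comp σ fun i => (n i : ℝ)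
  have hshift_D : ∑ i, (if n (σ i) = 2 then (1 : ℝ) else 0) = ∑ i, (if n i = 2 then 1 else 0) :=
    Equiv.sum_comp σ fun i => if n i = 2 then (1 : ℝ) else 0
  simp only [sub_mul, one_mul, mul_sub, mul_one, sum_add_distrib, sum_sub_distrib, sum_const,
    card_univ, nsmul_eq_mul, hshift_n, hshift_D, hsumR, sum_boole] at hbonds
  linarith

lemma hubbardEnergy_const_one (L : ℕ) [NeZero L] (U V : ℝ) :
    hubbardEnergy L U V (fun _ => 1) = V * L := by
  simp [hubbardEnergy, ZMod.card]

lemma mul_le_hubbardEnergy {L : ℕ} [NeZero L] {U V : ℝ} (hV : 0 ≤ V) (hUV : 2 * V ≤ U)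
    {n : ZMod L → ℕ} (hn : ∀ i, n i ≤ 2) (hsum : ∑ i, n i = L) :
    V * L ≤ hubbardEnergy L U V n := by
  have hbonds := card_le_sum_mul_comp_add_two_mul_card (Equiv.addRight 1) hn
    (by rwa [ZMod.card])
  simp only [ZMod.card, Equiv.coe_addRight] at hbonds
  have hD : (0 : ℝ) ≤ (U - 2 * V) * #{i | n i = 2} :=
    mul_nonneg (sub_nonneg.2 hUV) (Nat.cast_nonneg _)
  unfold hubbardEnergy
  linarith [mul_le_mul_of_nonneg_left hbonds hV]

theorem hubbard_t0_ground_energy_V_branch_general (L : ℕ) [NeZero L]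
    (U V : ℝ) (hV : 0 ≤ V) (hUV : 2 * V ≤ U) :
    IsLeast {x : ℝ | ∃ n : ZMod L → ℕ, (∀ i, n i ≤ 2) ∧ (∑ i : ZMod L, n i = L) ∧
        x = U * (Finset.univ.filter (fun i : ZMod L => n i = 2)).card
              + V * ∑ i : ZMod L, ((n i : ℝ) * (n (i + 1) : ℝ))}
      (V * L) ∧
    (∀ n : ZMod L → ℕ, (∀ i, n i = 1) →
      U * (Finset.univ.filter (fun i : ZMod L => n i = 2)).card
          + V * ∑ i : ZMod L, ((n i : ℝ) * (n (i + 1) : ℝ)) = V * L) := by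
  have hattain : ∀ n : ZMod L → ℕ, (∀ i, n i = 1) → hubbardEnergy L U V n = V * L := by
    intro n hn
    obtain rfl : n = fun _ => 1 := funext hn
    exact hubbardEnergy_const_one L U V
  refine ⟨⟨⟨fun _ => 1, fun _ => by norm_num, by simp [ZMod.card],
      (hattain _ fun _ => rfl).symm⟩, ?_⟩, hattain⟩
  rintro _ ⟨n, hn, hsum, rfl⟩
  exact mul_le_hubbardEnergy hV hUV hn hsum

/-- V-dominated branch of the extended Hubbard model at `t = 0`: for a ring of `L ≥ 1`
sites and `U ≥ 2V` (with `U, V ≥ 0`), the minimum of the energy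
`E(n) = U·D + V·Σᵢ nᵢ·n_{i+1}` over all half-filling configurations equals `V·L`, and
it is attained by the spin-density-wave configuration `n i = 1` for all `i`. -/
theorem hubbard_t0_ground_energy_V_branch (L : ℕ) [NeZero L]
    (U V : ℝ) (hU : 0 ≤ U) (hV : 0 ≤ V) (hUV : 2 * V ≤ U) :
    IsLeast {x : ℝ | ∃ n : ZMod L → ℕ, (∀ i, n i ≤ 2) ∧ (∑ i : ZMod L, n i = L) ∧
        x = U * (Finset.univ.filter (fun i : ZMod L => n i = 2)).card
              + V * ∑ i : ZMod L, ((n i : ℝ) * (n (i + 1) : ℝ))}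
      (V * L) ∧
    (∀ n : ZMod L → ℕ, (∀ i, n i = 1) →
      U * (Finset.univ.filter (fun i : ZMod L => n i = 2)).card
          + V * ∑ i : ZMod L, ((n i : ℝ) * (n (i + 1) : ℝ)) = V * L) :=
  hubbard_t0_ground_energy_V_branch_general L U V hV hUV
end
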